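/- The VBOS objective V(π) = Σ_x π_x (μ_x + σ_x sqrt(−2 ln π_x)), viewed as a function of π ∈ (0,1)^{|X|}, is concave, and strictly concave if σ_x > 0 for all x. -/

import Mathlib

open Finset in
/-- The VBOS objective `V(π) = Σ_x π_x (μ_x + σ_x sqrt(−2 ln π_x))`. -/
noncomputable def vbos {X : Type*} [Fintype X] (μ σ : X → ℝ) (p : X → ℝ) : ℝ :=
  ∑ x, p x * (μ x + σ x * Real.sqrt (-2 * Real.log (p x)))

/-!
`V` is separable: it is the sum over `x` of `t ↦ μ_x t + σ_x g(t)` evaluated at `π_x`, where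
`g(t) = t √(−2 ln t)`. So everything reduces to the strict concavity of `g` on `(0, 1)`: with
`u = √(−2 ln t)` one has `g' = u − u⁻¹`, which is strictly decreasing in `t` because `u` is and
`u ↦ u − u⁻¹` is increasing on `(0, ∞)`.
-/

open Set Real

section SeparableSum

variable {𝕜 β ι : Type*} {E : ι → Type*} [Fintype ι] [Semiring 𝕜] [PartialOrder 𝕜]
  [∀ i, AddCommMonoid (E i)] [AddCommMonoid β] [PartialOrder β]
  {s : ∀ i, Set (E i)} {f : ∀ i, E i → β}

theorem ConcaveOn.sum_pi [∀ i, SMul 𝕜 (E i)] [DistribMulAction 𝕜 β] [IsOrderedAddMonoid β]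
    (hf : ∀ i, ConcaveOn 𝕜 (s i) (f i)) :
    ConcaveOn 𝕜 (univ.pi s) fun x => ∑ i, f i (x i) := by
  refine ⟨convex_pi fun i _ => (hf i).1, fun x hx y hy a b ha hb hab => ?_⟩
  simp only [Finset.smul_sum, ← Finset.sum_add_distrib]
  exact Finset.sum_le_sum fun i _ => (hf i).2 (hx i (mem_univ i)) (hy i (mem_univ i)) ha hb hab

theorem StrictConcaveOn.sum_pi [∀ i, Module 𝕜 (E i)] [Module 𝕜 β] [IsOrderedCancelAddMonoid β]
    (hf : ∀ i, StrictConcaveOn 𝕜 (s i) (f i)) :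
    StrictConcaveOn 𝕜 (univ.pi s) fun x => ∑ i, f i (x i) := by
  refine ⟨convex_pi fun i _ => (hf i).1, fun x hx y hy hxy a b ha hb hab => ?_⟩
  obtain ⟨j, hj⟩ := Function.ne_iff.mp hxy
  simp only [Finset.smul_sum, ← Finset.sum_add_distrib, Pi.add_apply, Pi.smul_apply]
  exact Finset.sum_lt_sum
    (fun i _ => (hf i).concaveOn.2 (hx i (mem_univ i)) (hy i (mem_univ i)) ha.le hb.le hab)
    ⟨j, Finset.mem_univ j, (hf j).2 (hx j (mem_univ j)) (hy j (mem_univ j)) hj ha hb hab⟩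

end SeparableSum

theorem StrictConcaveOn.smul {𝕜 E β : Type*} [CommSemiring 𝕜] [PartialOrder 𝕜] [AddCommMonoid E]
    [AddCommMonoid β] [PartialOrder β] [SMul 𝕜 E] [Module 𝕜 β] [PosSMulStrictMono 𝕜 β]
    {s : Set E} {f : E → β} {c : 𝕜} (hc : 0 < c) (hf : StrictConcaveOn 𝕜 s f) :
    StrictConcaveOn 𝕜 s fun x => c • f x :=
  ⟨hf.1, fun x hx y hy hxy a b ha hb hab =>
    calc a • c • f x + b • c • f y = c • (a • f x + b • f y) := by
          rw [smul_add, smul_comm c, smul_comm c]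
      _ < c • f (a • x + b • y) := smul_lt_smul_of_pos_left (hf.2 hx hy hxy ha hb hab) hc⟩

theorem hasDerivAt_mul_sqrt_neg_two_mul_log {t : ℝ} (ht₀ : 0 < t) (ht₁ : t < 1) :
    HasDerivAt (fun t => t * √(-2 * log t)) (√(-2 * log t) - (√(-2 * log t))⁻¹) t := by
  have hpos : 0 < -2 * log t := by linarith [log_neg ht₀ ht₁]
  have hsqrt := ((hasDerivAt_log ht₀.ne').const_mul (-2)).sqrt hpos.ne'
  refine ((hasDerivAt_id' t).mul hsqrt).congr_deriv ?_
  have := sqrt_pos.2 hpos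
  field_simp
  ring

theorem strictAntiOn_sqrt_neg_two_mul_log : StrictAntiOn (fun t => √(-2 * log t)) (Ioc 0 1) :=
  fun x hx y hy hxy => sqrt_lt_sqrt (by linarith [log_nonpos hy.1.le hy.2])
    (by linarith [log_lt_log hx.1 hxy])

theorem strictConcaveOn_mul_sqrt_neg_two_mul_log :
    StrictConcaveOn ℝ (Ioo 0 1) fun t => t * √(-2 * log t) := by
  have hderiv (t : ℝ) (ht : t ∈ Ioo (0 : ℝ) 1) := hasDerivAt_mul_sqrt_neg_two_mul_log ht.1 ht.2
  refine StrictAntiOn.strictConcaveOn_of_deriv (convex_Ioo 0 1)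
    (fun t ht => (hderiv t ht).continuousAt.continuousWithinAt) ?_
  rw [interior_Ioo]
  intro x hx y hy hxy
  rw [(hderiv x hx).deriv, (hderiv y hy).deriv]
  have hu :=
    strictAntiOn_sqrt_neg_two_mul_log (Ioo_subset_Ioc_self hx) (Ioo_subset_Ioc_self hy) hxy
  have hy₀ : 0 < √(-2 * log y) := sqrt_pos.2 (by linarith [log_neg hy.1 hy.2])
  linarith [(inv_lt_inv₀ (hy₀.trans hu) hy₀).2 hu]

theorem concaveOn_mul_add_mul_sqrt_neg_two_mul_log (m : ℝ) {c : ℝ} (hc : 0 ≤ c) :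
    ConcaveOn ℝ (Ioo 0 1) fun t => t * (m + c * √(-2 * log t)) := by
  have := (LinearMap.concaveOn (m • LinearMap.id) (convex_Ioo 0 1)).add
    (strictConcaveOn_mul_sqrt_neg_two_mul_log.concaveOn.smul hc)
  refine this.congr fun t _ => ?_
  simp only [Pi.add_apply, LinearMap.smul_apply, LinearMap.id_apply, smul_eq_mul]
  ring

theorem strictConcaveOn_mul_add_mul_sqrt_neg_two_mul_log (m : ℝ) {c : ℝ} (hc : 0 < c) :
    StrictConcaveOn ℝ (Ioo 0 1) fun t => t * (m + c * √(-2 * log t)) := by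
  have := (strictConcaveOn_mul_sqrt_neg_two_mul_log.smul hc).add_concaveOn
    (LinearMap.concaveOn (m • LinearMap.id) (convex_Ioo 0 1))
  refine this.congr fun t _ => ?_
  simp only [Pi.add_apply, LinearMap.smul_apply, LinearMap.id_apply, smul_eq_mul]
  ring

/-- The VBOS objective, viewed as a function of `π ∈ (0,1)^{|X|}`, is concave,
and strictly concave if `σ_x > 0` for all `x`. -/
theorem stmt_5 {X : Type*} [Fintype X] (μ σ : X → ℝ) (hσ : ∀ x, 0 ≤ σ x) :
    ConcaveOn ℝ {p : X → ℝ | ∀ x, p x ∈ Set.Ioo (0 : ℝ) 1} (vbos μ σ) ∧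
      ((∀ x, 0 < σ x) →
        StrictConcaveOn ℝ {p : X → ℝ | ∀ x, p x ∈ Set.Ioo (0 : ℝ) 1} (vbos μ σ)) := by
  have hpi : {p : X → ℝ | ∀ x, p x ∈ Ioo (0 : ℝ) 1} = univ.pi fun _ => Ioo 0 1 := by
    ext; simp
  rw [hpi]
  exact ⟨ConcaveOn.sum_pi fun x => concaveOn_mul_add_mul_sqrt_neg_two_mul_log (μ x) (hσ x),
    fun hσ' => StrictConcaveOn.sum_pi fun x =>
      strictConcaveOn_mul_add_mul_sqrt_neg_two_mul_log (μ x) (hσ' x)⟩
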